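/- For all natural numbers m, n ≥ 2, the order in which unit cells are completed under the boustrophedon vertex traversal is itself a boustrophedon order on the (m−1)×(n−1) array of cells with alternation opposite to that of the vertex rows: T(i,j) < T(i',j') if and only if g(i,j) < g(i',j'), where g(i,j) = i·(n−1) + (n−2−j) if i is even and g(i,j) = i·(n−1) + j if i is odd. -/
import Mathlib


/-- The boustrophedon (S-rule) enumeration of the `m × n` grid of vertices:
the `k`-th vertex visited is in row `k / n`; even-indexed rows are read
left-to-right and odd-indexed rows right-to-left. -/
def bous (m n : ℕ) (hn : 1 ≤ n) (k : Fin (m * n)) : Fin m × Fin n :=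
  if Even ((k : ℕ) / n) then
    (⟨(k : ℕ) / n, Nat.div_lt_of_lt_mul (Nat.mul_comm m n ▸ k.isLt)⟩, ⟨(k : ℕ) % n, Nat.mod_lt _ hn⟩)
  else
    (⟨(k : ℕ) / n, Nat.div_lt_of_lt_mul (Nat.mul_comm m n ▸ k.isLt)⟩,
     ⟨n - 1 - (k : ℕ) % n, by omega⟩)

/-- The position (time) at which the vertex `v` is visited by the
boustrophedon enumeration, i.e. `f⁻¹ v` as a natural number. -/
noncomputable def bousInv (m n : ℕ) (hn : 1 ≤ n) (v : Fin m × Fin n) : ℕ :=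
  haveI : Nonempty (Fin (m * n)) := ⟨⟨0, Nat.mul_pos v.1.pos v.2.pos⟩⟩
  (Function.invFun (bous m n hn) v : Fin (m * n)).val

/-- The completion time `T(i,j)` of the unit cell (room) `(i,j)`
(with `i < m - 1`, `j < n - 1`): the maximum of `f⁻¹` over its four corners
`(i,j)`, `(i+1,j)`, `(i,j+1)`, `(i+1,j+1)`.  This encodes the S-rule's setting
that a room is traversed exactly when the last vertex of its contour is. -/
noncomputable def cellTime (m n : ℕ) (hn : 1 ≤ n) (i j : ℕ)
    (hi : i < m - 1) (hj : j < n - 1) : ℕ :=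
  max
    (max (bousInv m n hn (⟨i, by omega⟩, ⟨j, by omega⟩))
         (bousInv m n hn (⟨i + 1, by omega⟩, ⟨j, by omega⟩)))
    (max (bousInv m n hn (⟨i, by omega⟩, ⟨j + 1, by omega⟩))
         (bousInv m n hn (⟨i + 1, by omega⟩, ⟨j + 1, by omega⟩)))

lemma bous_injective (m n : ℕ) (hn : 1 ≤ n) : Function.Injective (bous m n hn) := by
  intro k k' h
  have hmod : (k : ℕ) % n < n := Nat.mod_lt _ hn
  have hmod' : (k' : ℕ) % n < n := Nat.mod_lt _ hn
  have hdm := Nat.div_add_mod (k : ℕ) n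
  have hdm' := Nat.div_add_mod (k' : ℕ) n
  unfold bous at h
  by_cases hp : Even ((k:ℕ)/n) <;> by_cases hp' : Even ((k':ℕ)/n) <;>
    simp only [hp, hp', if_pos, if_neg, not_true, not_false_iff, Prod.mk.injEq,
      Fin.mk.injEq, if_true, ite_false, ite_true] at h <;>
    [skip; (exact absurd (h.1 ▸ hp) hp'); (exact absurd (h.1 ▸ hp') hp); skip] <;>
    · obtain ⟨h1, h2⟩ := h
      rw [h1] at hdm
      exact Fin.ext (by omega)

lemma bousInv_eq (m n : ℕ) (hn : 1 ≤ n) (i j : ℕ) (hi : i < m) (hj : j < n) :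
    bousInv m n hn (⟨i, hi⟩, ⟨j, hj⟩) = i * n + (if Even i then j else n - 1 - j) := by
  set r := (if Even i then j else n - 1 - j) with hr
  have hrlt : r < n := by rw [hr]; split <;> omega
  have hk : n * i + r < m * n := by
    have h1 : n * (i + 1) ≤ n * m := Nat.mul_le_mul_left n hi
    rw [mul_comm n m, mul_add, mul_one] at h1
    omega
  have hdiv : (n * i + r) / n = i := by
    rw [Nat.mul_add_div (by omega), Nat.div_eq_of_lt hrlt]; omega
  have hmodk : (n * i + r) % n = r := by
    rw [Nat.mul_add_mod, Nat.mod_eq_of_lt hrlt]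
  have hb : bous m n hn ⟨n * i + r, hk⟩ = (⟨i, hi⟩, ⟨j, hj⟩) := by
    unfold bous
    by_cases hp : Even i
    · rw [if_pos (by simpa [hdiv] using hp)]
      simp only [Prod.mk.injEq, Fin.mk.injEq]
      exact ⟨hdiv, by rw [hmodk, hr, if_pos hp]⟩
    · rw [if_neg (by simpa [hdiv] using hp)]
      simp only [Prod.mk.injEq, Fin.mk.injEq]
      refine ⟨hdiv, ?_⟩
      rw [hmodk, hr, if_neg hp]; omega
  haveI : Nonempty (Fin (m * n)) := ⟨⟨0, by omega⟩⟩
  have hli := Function.leftInverse_invFun (bous_injective m n hn) ⟨n * i + r, hk⟩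
  unfold bousInv
  rw [← hb, hli]
  simp [Nat.mul_comm]

lemma cellTime_eq (m n : ℕ) (hm : 2 ≤ m) (hn : 2 ≤ n) (i j : ℕ)
    (hi : i < m - 1) (hj : j < n - 1) :
    cellTime m n (by omega) i j hi hj =
      (if Even i then i * (n - 1) + (n - 2 - j) else i * (n - 1) + j) + i + n + 1 := by
  unfold cellTime
  rw [bousInv_eq, bousInv_eq, bousInv_eq, bousInv_eq]
  have h1 : (i + 1) * n = i * n + n := by ring
  have h2 : i * n = i * (n - 1) + i := by
    conv_lhs => rw [show n = (n - 1) + 1 by omega]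
    rw [Nat.mul_succ]
  rw [h1]
  by_cases hp : Even i
  · have hp1 : ¬ Even (i + 1) := by simp [Nat.even_add_one, hp]
    simp only [if_pos hp, if_neg hp1]
    omega
  · have hp1 : Even (i + 1) := by simp [Nat.even_add_one, hp]
    simp only [if_neg hp, if_pos hp1]
    omega

lemma key (n i i' g g' : ℕ) (hn : 2 ≤ n)
    (hg1 : i * (n - 1) ≤ g) (hg2 : g ≤ i * (n - 1) + (n - 2))
    (hg1' : i' * (n - 1) ≤ g') (hg2' : g' ≤ i' * (n - 1) + (n - 2)) :
    g + i + n + 1 < g' + i' + n + 1 ↔ g < g' := by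
  rcases lt_trichotomy i i' with h | h | h
  · have h3 : (i + 1) * (n - 1) ≤ i' * (n - 1) := Nat.mul_le_mul_right _ h
    rw [add_mul, one_mul] at h3
    omega
  · subst h; omega
  · have h3 : (i' + 1) * (n - 1) ≤ i * (n - 1) := Nat.mul_le_mul_right _ h
    rw [add_mul, one_mul] at h3
    omega

/-- For all `m, n ≥ 2`, the order in which unit cells are completed under the
boustrophedon vertex traversal is itself a boustrophedon order on the
`(m−1) × (n−1)` array of cells, with alternation opposite to that of the
vertex rows: `T(i,j) < T(i',j')` iff `g(i,j) < g(i',j')`, where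
`g(i,j) = i·(n−1) + (n−2−j)` if `i` is even and `g(i,j) = i·(n−1) + j` if `i`
is odd. -/
theorem cellTime_order (m n : ℕ) (hm : 2 ≤ m) (hn : 2 ≤ n)
    (i j i' j' : ℕ) (hi : i < m - 1) (hj : j < n - 1)
    (hi' : i' < m - 1) (hj' : j' < n - 1) :
    cellTime m n (by omega) i j hi hj < cellTime m n (by omega) i' j' hi' hj' ↔
      (if Even i then i * (n - 1) + (n - 2 - j) else i * (n - 1) + j) <
      (if Even i' then i' * (n - 1) + (n - 2 - j') else i' * (n - 1) + j') := by
  rw [cellTime_eq m n hm hn i j hi hj, cellTime_eq m n hm hn i' j' hi' hj']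
  exact key n i i' _ _ hn (by split <;> omega) (by split <;> omega)
    (by split <;> omega) (by split <;> omega)
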